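/- Let F = ℚ(q) be the field of rational functions, and let W be the F-vector space with basis {v_x} indexed by the left I-states x of size k. For each left I-state x of size k, define the canonical basis element v_x^◊ = Σ_z q^{Σ_{i=1}^{n−k}(h_i^z − h_i^x)} v_z, where the sum is over left I-states z of size k with h_i^x ≤ h_i^z < h_{i+1}^x for all 1 ≤ i ≤ n−k. Let (·,·)_S be the symmetric F-bilinear form on W with (v_x, v_y)_S = (k)!_{q²} if x = y and 0 otherwise. Then for left I-states x, y of size k: (v_x^◊, v_y^◊)_S = 0 if x and y are too far, and otherwise (v_x^◊, v_y^◊)_S = q^d · (k)!_{q²} · Π_{i=1}^{n−k} (l_i)_{q²}, where d = Σ_{i=1}^{k} |x_i − y_i| and l_1, …, l_{n−k} are the lengths of the generating intervals between x and y. -/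

import Mathlib

/-!
Expanding in the standard basis, `(v_x^◊, v_y^◊)_S` is `(k)!_{q²}` times a sum over the I-states
`z` admissible for both `x` and `y`. Such a `z` is determined by its first `n - k` holes, and
double admissibility says exactly that the `j`-th hole lies in an interval of length `l_j`
depending only on `x` and `y`, independently for each `j`. Hence the sum factors into geometric
sums and equals `q^(∑_j |h_j^x - h_j^y|) ∏_j (l_j)_{q²}`; the exponent is `∑_i |x_i - y_i|`, as both
count the cells between the lattice paths of `x` and `y`. If `y_i + 2 ≤ x_i`, the first hole
`h_j^y` of `y` after `y_i` satisfies `h_{j+1}^x ≤ y_i + 1 ≤ h_j^y`, so the `j`-th interval is empty.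
-/

/-- The `i`-th smallest element (0-indexed) of a finite set of natural numbers. -/
def nthElt (s : Finset ℕ) (i : ℕ) : ℕ := (s.sort (· ≤ ·)).getD i 0

/-- The hole set of an I-state: the complement `{0, …, n} \ s`. -/
def holes (n : ℕ) (s : Finset ℕ) : Finset ℕ := Finset.range (n + 1) \ s

/-- The `i`-th hole (0-indexed): `hnth n s i` is `h_{i+1}^s` in 1-indexed notation. -/
def hnth (n : ℕ) (s : Finset ℕ) (i : ℕ) : ℕ := nthElt (holes n s) i

/-- Two I-states of size `k` are too far if `|x_i − y_i| > 1` for some `i`. -/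
def TooFar (k : ℕ) (x y : Finset ℕ) : Prop :=
  ∃ i < k, 1 < ((nthElt x i : ℤ) - (nthElt y i : ℤ)).natAbs

/-- `z` contributes to the canonical basis element `v_x^◊`:
`h_i^x ≤ h_i^z < h_{i+1}^x` for all `1 ≤ i ≤ n − k` (0-indexed). -/
def CanonAdm (n k : ℕ) (x z : Finset ℕ) : Prop :=
  ∀ i < n - k, hnth n x i ≤ hnth n z i ∧ hnth n z i < hnth n x (i + 1)

instance (n k : ℕ) (x z : Finset ℕ) : Decidable (CanonAdm n k x z) := by
  unfold CanonAdm; infer_instance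

/-- The nonsymmetric quantum integer `(m)_{q²} = 1 + q² + ⋯ + q^{2(m−1)}` in `ℚ(q)`. -/
noncomputable def qIntF (m : ℕ) : RatFunc ℚ :=
  ∑ j ∈ Finset.range m, RatFunc.X ^ (2 * j)

/-- The nonsymmetric quantum factorial `(k)!_{q²}` in `ℚ(q)`. -/
noncomputable def qFactF (k : ℕ) : RatFunc ℚ :=
  ∏ j ∈ Finset.range k, qIntF (j + 1)

/-- A vector of the weight space `(V^{⊗n})_k`, written in coordinates with respect to the
standard basis `{v_z}` indexed by left I-states `z` of size `k`. -/
noncomputable def canonVec (n k : ℕ) (x : Finset ℕ) : Finset ℕ → RatFunc ℚ := fun z =>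
  if z ⊆ Finset.range n ∧ z.card = k ∧ CanonAdm n k x z then
    RatFunc.X ^ (∑ i ∈ Finset.range (n - k), (hnth n z i - hnth n x i))
  else 0

/-- The Sartori bilinear form: `(k)!_{q²}` times the identity matrix in the standard basis. -/
noncomputable def formS (n k : ℕ) (f g : Finset ℕ → RatFunc ℚ) : RatFunc ℚ :=
  qFactF k * ∑ z ∈ (Finset.range n).powerset.filter (fun z => z.card = k), f z * g z

open Finset

section nthElt

variable {s : Finset ℕ} {i : ℕ}

lemma nthElt_eq_orderEmbOfFin (hi : i < #s) : nthElt s i = s.orderEmbOfFin rfl ⟨i, hi⟩ := by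
  rw [orderEmbOfFin_apply, nthElt, List.getD_eq_getElem _ _ (by simpa using hi)]
  rfl

lemma nthElt_mem (hi : i < #s) : nthElt s i ∈ s := by
  rw [nthElt_eq_orderEmbOfFin hi]
  exact orderEmbOfFin_mem s rfl _

lemma nthElt_le_of_forall_le {b : ℕ} (hb : ∀ a ∈ s, a ≤ b) (i : ℕ) : nthElt s i ≤ b := by
  by_cases hi : i < #s
  · exact hb _ (nthElt_mem hi)
  · rw [nthElt, List.getD_eq_default _ _ (by simpa using hi)]
    exact Nat.zero_le b

lemma exists_nthElt_eq {a : ℕ} (ha : a ∈ s) : ∃ i < #s, nthElt s i = a := by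
  rw [← mem_coe, ← range_orderEmbOfFin s rfl] at ha
  obtain ⟨⟨i, hi⟩, rfl⟩ := ha
  exact ⟨i, hi, nthElt_eq_orderEmbOfFin hi⟩

lemma nthElt_eq_of_strictMono {m : ℕ} {f : Fin m → ℕ} (hf : StrictMono f)
    (hs : (s : Set ℕ) = Set.range f) (i : Fin m) : nthElt s i = f i := by
  have hsf : s = univ.image f := coe_injective (by rw [hs, coe_image, coe_univ, Set.image_univ])
  have hcard : #s = m := by rw [hsf, card_image_of_injective _ hf.injective, card_fin]
  subst hcard
  rw [nthElt_eq_orderEmbOfFin i.2,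
    ← orderEmbOfFin_unique rfl (fun j => by rw [← mem_coe, hs]; exact ⟨j, rfl⟩) hf]

lemma card_filter_lt_nthElt (hi : i < #s) : #(s.filter (· < nthElt s i)) = i := by
  set e := s.orderEmbOfFin rfl
  have h : s.filter (· < nthElt s i) = (Iio (⟨i, hi⟩ : Fin #s)).map e.toEmbedding := by
    ext a
    simp only [mem_filter, mem_map, mem_Iio, nthElt_eq_orderEmbOfFin hi]
    constructor
    · rintro ⟨ha, hlt⟩
      obtain ⟨j, rfl⟩ : a ∈ Set.range e := by rw [range_orderEmbOfFin]; exact ha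
      exact ⟨j, e.lt_iff_lt.1 hlt, rfl⟩
    · rintro ⟨j, hj, rfl⟩
      exact ⟨orderEmbOfFin_mem s rfl j, e.lt_iff_lt.2 hj⟩
  rw [h, card_map, Fin.card_Iio]

lemma nthElt_le_iff_lt_card_filter (hi : i < #s) {t : ℕ} :
    nthElt s i ≤ t ↔ i < #(s.filter (· ≤ t)) := by
  constructor
  · intro h
    calc i = #(s.filter (· < nthElt s i)) := (card_filter_lt_nthElt hi).symm
      _ < #(s.filter (· ≤ t)) := by
        refine card_lt_card ((ssubset_iff_of_subset ?_).2 ⟨nthElt s i, ?_, ?_⟩)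
        · exact monotone_filter_right s fun a _ ha => ha.le.trans h
        · exact mem_filter.2 ⟨nthElt_mem hi, h⟩
        · simp
  · intro h
    by_contra! ht
    have := card_le_card (monotone_filter_right s fun a _ (ha : a ≤ t) => ha.trans_lt ht)
    rw [card_filter_lt_nthElt hi] at this
    omega

end nthElt

section holes

variable {n : ℕ} {s : Finset ℕ}

lemma mem_holes {a : ℕ} : a ∈ holes n s ↔ a ≤ n ∧ a ∉ s := by
  simp [holes]

lemma holes_subset_range : holes n s ⊆ range (n + 1) := sdiff_subset

lemma card_holes (hs : s ⊆ range n) : #(holes n s) = n - #s + 1 := by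
  have := card_le_card hs
  rw [card_range] at this
  rw [holes, card_sdiff_of_subset (hs.trans (range_subset_range.2 n.le_succ)), card_range]
  omega

lemma card_filter_holes_add {t : ℕ} (ht : t ≤ n) :
    #((holes n s).filter (· ≤ t)) + #(s.filter (· ≤ t)) = t + 1 := by
  have hH : (holes n s).filter (· ≤ t) = (range (t + 1)).filter (· ∉ s) := by
    ext a; simp only [mem_filter, mem_holes, mem_range]; grind
  have hs : s.filter (· ≤ t) = (range (t + 1)).filter (· ∈ s) := by
    ext a; simp only [mem_filter, mem_range]; grind
  rw [hH, hs, add_comm, card_filter_add_card_filter_not, card_range]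

lemma hnth_le (i : ℕ) : hnth n s i ≤ n :=
  nthElt_le_of_forall_le (fun _ ha => (mem_holes.1 ha).1) i

lemma hnth_notMem {i : ℕ} (hi : i < #(holes n s)) : hnth n s i ∉ s :=
  (mem_holes.1 (nthElt_mem hi)).2

lemma hnth_last (hs : s ⊆ range n) : hnth n s (n - #s) = n := by
  refine (hnth_le _).antisymm (not_lt.1 fun hlt => ?_)
  have hall : s.filter (· ≤ n - 1) = s :=
    filter_true_of_mem fun a ha => by have := mem_range.1 (hs ha); omega
  have hcount := card_filter_holes_add (n := n) (s := s) (t := n - 1) (by omega)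
  have hlast := (nthElt_le_iff_lt_card_filter (s := holes n s) (i := n - #s)
    (by rw [card_holes hs]; omega)).1 (Nat.le_sub_one_of_lt hlt)
  rw [hall] at hcount
  omega

end holes

lemma sum_range_natAbs_ite_lt_sub {N a b : ℕ} (ha : a ≤ N) (hb : b ≤ N) :
    ∑ t ∈ range N, ((if t < a then (1 : ℤ) else 0) - if t < b then 1 else 0).natAbs =
      ((a : ℤ) - b).natAbs := by
  have hsummand : ∀ t, ((if t < a then (1 : ℤ) else 0) - if t < b then 1 else 0).natAbs =
      if t ∈ Ico (min a b) (max a b) then 1 else 0 := by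
    intro t
    simp only [mem_Ico]
    split_ifs <;> omega
  have hIco : (range N).filter (· ∈ Ico (min a b) (max a b)) = Ico (min a b) (max a b) := by
    rw [filter_mem_eq_inter, inter_eq_right]
    intro t ht
    simp only [mem_Ico, mem_range] at ht ⊢
    omega
  rw [sum_congr rfl fun t _ => hsummand t, sum_boole, hIco, Nat.card_Ico, Nat.cast_id]
  omega

lemma sum_natAbs_nthElt_sub {m : ℕ} {s u : Finset ℕ} (hs : s ⊆ range m) (hu : u ⊆ range m)
    (hsu : #s = #u) :
    ∑ i ∈ range #s, ((nthElt s i : ℤ) - nthElt u i).natAbs =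
      ∑ t ∈ range m, ((#(s.filter (· ≤ t)) : ℤ) - #(u.filter (· ≤ t))).natAbs := by
  have hle {v : Finset ℕ} (hv : v ⊆ range m) {i : ℕ} (hi : i < #v) : nthElt v i ≤ m :=
    (mem_range.1 (hv (nthElt_mem hi))).le
  calc ∑ i ∈ range #s, ((nthElt s i : ℤ) - nthElt u i).natAbs
      = ∑ i ∈ range #s, ∑ t ∈ range m,
          ((if t < nthElt s i then (1 : ℤ) else 0) - if t < nthElt u i then 1 else 0).natAbs := by
        refine sum_congr rfl fun i hi => ?_
        rw [mem_range] at hi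
        exact (sum_range_natAbs_ite_lt_sub (hle hs hi) (hle hu (hsu ▸ hi))).symm
    _ = ∑ t ∈ range m, ∑ i ∈ range #s, ((if i < #(s.filter (· ≤ t)) then (1 : ℤ) else 0) -
          if i < #(u.filter (· ≤ t)) then 1 else 0).natAbs := by
        rw [sum_comm]
        refine sum_congr rfl fun t _ => sum_congr rfl fun i hi => ?_
        rw [mem_range] at hi
        have hs_t := nthElt_le_iff_lt_card_filter hi (t := t)
        have hu_t := nthElt_le_iff_lt_card_filter (hsu ▸ hi) (t := t)
        split_ifs <;> omega
    _ = _ := sum_congr rfl fun t _ => sum_range_natAbs_ite_lt_sub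
          (card_le_card (filter_subset _ _)) (hsu ▸ card_le_card (filter_subset _ _))

lemma sum_natAbs_hnth_sub {n : ℕ} {x y : Finset ℕ} (hx : x ⊆ range n) (hy : y ⊆ range n)
    (hxy : #x = #y) :
    ∑ i ∈ range (n - #x), ((hnth n x i : ℤ) - hnth n y i).natAbs =
      ∑ i ∈ range #x, ((nthElt x i : ℤ) - nthElt y i).natAbs := by
  have hHx := card_holes hx
  have hHy := card_holes hy
  have hrange := range_subset_range.2 n.le_succ
  calc ∑ i ∈ range (n - #x), ((hnth n x i : ℤ) - hnth n y i).natAbs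
      = ∑ i ∈ range #(holes n x),
          ((nthElt (holes n x) i : ℤ) - nthElt (holes n y) i).natAbs := by
        rw [hHx, sum_range_succ, ← hnth, ← hnth, hnth_last hx, hxy, hnth_last hy]
        simp [hnth]
    _ = ∑ t ∈ range (n + 1), ((#((holes n x).filter (· ≤ t)) : ℤ) -
          #((holes n y).filter (· ≤ t))).natAbs :=
        sum_natAbs_nthElt_sub holes_subset_range holes_subset_range (by omega)
    _ = ∑ t ∈ range (n + 1), ((#(x.filter (· ≤ t)) : ℤ) - #(y.filter (· ≤ t))).natAbs := by
        refine sum_congr rfl fun t ht => ?_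
        have hxt := card_filter_holes_add (s := x) (Nat.le_of_lt_succ (mem_range.1 ht))
        have hyt := card_filter_holes_add (s := y) (Nat.le_of_lt_succ (mem_range.1 ht))
        omega
    _ = _ := (sum_natAbs_nthElt_sub (hx.trans hrange) (hy.trans hrange) hxy).symm

lemma exists_hnth_succ_le_hnth {n : ℕ} {x y : Finset ℕ} (hx : x ⊆ range n) (hy : y ⊆ range n)
    (hxy : #x = #y) {i : ℕ} (hi : i < #x) (hfar : nthElt y i + 2 ≤ nthElt x i) :
    ∃ j < n - #x, hnth n x (j + 1) ≤ hnth n y j := by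
  set a := nthElt y i
  have hxn : nthElt x i < n := mem_range.1 (hx (nthElt_mem hi))
  have hy_le : i < #(y.filter (· ≤ a)) := (nthElt_le_iff_lt_card_filter (hxy ▸ hi)).1 le_rfl
  have hx_gt : #(x.filter (· ≤ a + 1)) ≤ i :=
    not_lt.1 fun h => by have := (nthElt_le_iff_lt_card_filter hi).2 h; omega
  have hHy := card_filter_holes_add (n := n) (s := y) (t := a) (by omega)
  have hHx := card_filter_holes_add (n := n) (s := x) (t := a + 1) (by omega)
  have hHx_le : #((holes n x).filter (· ≤ a + 1)) ≤ n - #x + 1 :=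
    (card_filter_le _ _).trans (card_holes hx).le
  -- `y` has exactly `a - i` holes below `a = y_i`, while `x` has at least `a - i + 2` holes up to
  -- `a + 1`, so `j = a - i` works.
  refine ⟨a - i, by omega, ?_⟩
  have hxj : hnth n x (a - i + 1) ≤ a + 1 :=
    (nthElt_le_iff_lt_card_filter (by rw [card_holes hx]; omega)).2 (by omega)
  have hyj : a < hnth n y (a - i) :=
    not_le.1 fun h => by
      have := (nthElt_le_iff_lt_card_filter (by rw [card_holes hy]; omega)).1 h
      omega
  omega

lemma strictMono_snoc {m b : ℕ} {p : Fin m → ℕ} (hp : StrictMono p) (hpb : ∀ j, p j < b) :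
    StrictMono (Fin.snoc p b : Fin (m + 1) → ℕ) := by
  intro i j hij
  induction j using Fin.lastCases with
  | last =>
    induction i using Fin.lastCases with
    | last => exact absurd hij (lt_irrefl _)
    | cast i => simpa using hpb i
  | cast j =>
    induction i using Fin.lastCases with
    | last => exact absurd hij (not_lt.2 (Fin.le_last _))
    | cast i => simpa using hp (Fin.castSucc_lt_castSucc_iff.1 hij)

section holeVector

variable {n m : ℕ} {p : Fin m → ℕ}

lemma card_sdiff_image (hp : StrictMono p) (hpn : ∀ j, p j < n) :
    #(range n \ univ.image p) = n - m := by
  rw [card_sdiff_of_subset (fun a ha => ?_), card_range, card_image_of_injective _ hp.injective,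
    card_univ, Fintype.card_fin]
  obtain ⟨j, -, rfl⟩ := mem_image.1 ha
  exact mem_range.2 (hpn j)

lemma hnth_sdiff_image (hp : StrictMono p) (hpn : ∀ j, p j < n) (j : Fin m) :
    hnth n (range n \ univ.image p) j = p j := by
  have hholes : (holes n (range n \ univ.image p) : Set ℕ) =
      Set.range (Fin.snoc p n : Fin (m + 1) → ℕ) := by
    rw [Fin.range_snoc]
    ext a
    simp only [mem_coe, mem_holes, mem_sdiff, mem_range, Set.mem_insert_iff, Set.mem_range]
    constructor
    · rintro ⟨han, hna⟩
      by_contra! h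
      exact hna ⟨by omega, by simpa using h.2⟩
    · rintro (rfl | ⟨j, rfl⟩)
      · simp
      · exact ⟨(hpn j).le, fun h => h.2 (by simp)⟩
  rw [hnth, ← Fin.val_castSucc j, nthElt_eq_of_strictMono (strictMono_snoc hp hpn) hholes,
    Fin.snoc_castSucc]

end holeVector

lemma sdiff_image_hnth {n : ℕ} {z : Finset ℕ} (hz : z ⊆ range n) :
    range n \ univ.image (fun j : Fin (n - #z) => hnth n z j) = z := by
  have hH := card_holes hz
  ext a
  simp only [mem_sdiff, mem_range, mem_image, mem_univ, true_and, not_exists]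
  constructor
  · rintro ⟨han, hne⟩
    by_contra haz
    obtain ⟨j, hj, rfl⟩ := exists_nthElt_eq (mem_holes.2 ⟨han.le, haz⟩)
    have hjn : j ≠ n - #z := by rintro rfl; exact han.ne (hnth_last hz)
    exact hne ⟨j, by omega⟩ rfl
  · intro haz
    exact ⟨mem_range.1 (hz haz), fun j hj => hnth_notMem (by omega) (hj ▸ haz)⟩

/-- The positions allowed for the `j`-th hole of an I-state contributing to both `v_x^◊` and
`v_y^◊`: the paper's `j+1`-st generating interval shifted down by one. -/
def genInterval (n : ℕ) (x y : Finset ℕ) (j : ℕ) : Finset ℕ :=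
  Ico (max (hnth n x j) (hnth n y j)) (min (hnth n x (j + 1)) (hnth n y (j + 1)))

lemma canonAdm_and_canonAdm_iff {n k : ℕ} {x y z : Finset ℕ} :
    CanonAdm n k x z ∧ CanonAdm n k y z ↔ ∀ j : Fin (n - k), hnth n z j ∈ genInterval n x y j := by
  simp only [CanonAdm, genInterval, mem_Ico, max_le_iff, lt_min_iff, Fin.forall_iff]
  grind

lemma strictMono_of_forall_mem_genInterval {n : ℕ} {x y : Finset ℕ} :
    ∀ {m : ℕ} {p : Fin m → ℕ}, (∀ j : Fin m, p j ∈ genInterval n x y j) → StrictMono p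
  | 0, _, _ => fun i => i.elim0
  | _ + 1, p, hp => Fin.strictMono_iff_lt_succ.2 fun j => by
      have hj := mem_Ico.1 (hp j.castSucc)
      have hj' := mem_Ico.1 (hp j.succ)
      simp only [Fin.val_castSucc, Fin.val_succ] at hj hj'
      exact hj.2.trans_le (min_le_max.trans hj'.1)

lemma lt_of_mem_genInterval {n : ℕ} {x y : Finset ℕ} {j c : ℕ} (hc : c ∈ genInterval n x y j) :
    c < n :=
  (mem_Ico.1 hc).2.trans_le ((min_le_left _ _).trans (hnth_le _))

lemma sum_filter_canonAdm_eq_sum_piFinset {M : Type*} [AddCommMonoid M] {n k : ℕ} (hkn : k ≤ n)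
    (x y : Finset ℕ) (F : (Fin (n - k) → ℕ) → M) :
    ∑ z ∈ ((range n).powerset.filter (fun z => z.card = k)).filter
        (fun z => CanonAdm n k x z ∧ CanonAdm n k y z), F (fun j => hnth n z j) =
      ∑ p ∈ Fintype.piFinset (fun j : Fin (n - k) => genInterval n x y j), F p := by
  refine sum_nbij' (fun z j => hnth n z j) (fun p => range n \ univ.image p) ?_ ?_ ?_ ?_
    fun _ _ => rfl
  · intro z hz
    exact Fintype.mem_piFinset.2 (canonAdm_and_canonAdm_iff.1 (mem_filter.1 hz).2)
  · intro p hp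
    have hI := Fintype.mem_piFinset.1 hp
    have hmono := strictMono_of_forall_mem_genInterval hI
    have hlt j := lt_of_mem_genInterval (hI j)
    refine mem_filter.2 ⟨mem_filter.2 ⟨mem_powerset.2 sdiff_subset, ?_⟩, ?_⟩
    · rw [card_sdiff_image hmono hlt]
      omega
    · exact canonAdm_and_canonAdm_iff.2 fun j => hnth_sdiff_image hmono hlt j ▸ hI j
  · intro z hz
    obtain ⟨hzn, rfl⟩ := mem_filter.1 (mem_filter.1 hz).1
    exact sdiff_image_hnth (mem_powerset.1 hzn)
  · intro p hp
    have hI := Fintype.mem_piFinset.1 hp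
    funext j
    exact hnth_sdiff_image (strictMono_of_forall_mem_genInterval hI)
      (fun j => lt_of_mem_genInterval (hI j)) j

lemma sum_Ico_max_X_pow (a b m : ℕ) :
    ∑ c ∈ Ico (max a b) m, (RatFunc.X : RatFunc ℚ) ^ ((c - a) + (c - b)) =
      RatFunc.X ^ ((a : ℤ) - b).natAbs * qIntF (m - max a b) := by
  rw [sum_Ico_eq_sum_range, qIntF, mul_sum]
  refine sum_congr rfl fun j _ => ?_
  rw [← pow_add]
  congr 1
  omega

lemma sum_canonVec_mul_canonVec {n k : ℕ} (hkn : k ≤ n) {x y : Finset ℕ}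
    (hx : x ⊆ range n) (hy : y ⊆ range n) (hxk : #x = k) (hyk : #y = k) :
    ∑ z ∈ (range n).powerset.filter (fun z => z.card = k), canonVec n k x z * canonVec n k y z =
      RatFunc.X ^ (∑ i ∈ range k, ((nthElt x i : ℤ) - nthElt y i).natAbs) *
        ∏ i ∈ range (n - k),
          qIntF (min (hnth n x (i + 1)) (hnth n y (i + 1)) - max (hnth n x i) (hnth n y i)) := by
  set g : Fin (n - k) → ℕ → RatFunc ℚ := fun j c =>
    RatFunc.X ^ ((c - hnth n x j) + (c - hnth n y j))
  have hsummand : ∀ z ∈ (range n).powerset.filter (fun z => z.card = k),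
      canonVec n k x z * canonVec n k y z =
        if CanonAdm n k x z ∧ CanonAdm n k y z then ∏ j, g j (hnth n z j) else 0 := by
    intro z hz
    rw [mem_filter, mem_powerset] at hz
    have hprod : ∏ j, g j (hnth n z j) =
        RatFunc.X ^ (∑ i ∈ range (n - k), (hnth n z i - hnth n x i)) *
          RatFunc.X ^ (∑ i ∈ range (n - k), (hnth n z i - hnth n y i)) := by
      rw [← pow_add, ← sum_add_distrib, prod_pow_eq_pow_sum,
        Fin.sum_univ_eq_sum_range (fun i => (hnth n z i - hnth n x i) + (hnth n z i - hnth n y i))]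
    by_cases hcx : CanonAdm n k x z <;> by_cases hcy : CanonAdm n k y z <;>
      simp [canonVec, hz, hcx, hcy, hprod]
  subst hxk
  calc _ = ∑ z ∈ ((range n).powerset.filter (fun z => z.card = #x)).filter
        (fun z => CanonAdm n #x x z ∧ CanonAdm n #x y z), ∏ j, g j (hnth n z j) := by
        rw [sum_congr rfl hsummand, ← sum_filter]
    _ = ∑ p ∈ Fintype.piFinset (fun j : Fin (n - #x) => genInterval n x y j), ∏ j, g j (p j) :=
        sum_filter_canonAdm_eq_sum_piFinset hkn x y fun p => ∏ j, g j (p j)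
    _ = ∏ j : Fin (n - #x), ∑ c ∈ genInterval n x y j, g j c := (prod_univ_sum _ _).symm
    _ = _ := by
        simp only [g, genInterval, sum_Ico_max_X_pow, prod_mul_distrib, prod_pow_eq_pow_sum,
          Fin.sum_univ_eq_sum_range (fun i => ((hnth n x i : ℤ) - hnth n y i).natAbs),
          Fin.prod_univ_eq_prod_range (fun i => qIntF (min (hnth n x (i + 1)) (hnth n y (i + 1)) -
            max (hnth n x i) (hnth n y i))),
          sum_natAbs_hnth_sub hx hy hyk.symm]

lemma TooFar.exists_min_sub_max_eq_zero {n k : ℕ} {x y : Finset ℕ} (hfar : TooFar k x y)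
    (hx : x ⊆ range n) (hy : y ⊆ range n) (hxk : #x = k) (hyk : #y = k) :
    ∃ j < n - k, min (hnth n x (j + 1)) (hnth n y (j + 1)) - max (hnth n x j) (hnth n y j) = 0 := by
  obtain ⟨i, hi, hfar⟩ := hfar
  subst hxk
  rcases le_total (nthElt x i) (nthElt y i) with hle | hle
  · obtain ⟨j, hj, h⟩ := exists_hnth_succ_le_hnth hy hx hyk (hyk ▸ hi) (by omega)
    exact ⟨j, hyk ▸ hj, by omega⟩
  · obtain ⟨j, hj, h⟩ := exists_hnth_succ_le_hnth hx hy hyk.symm hi (by omega)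
    exact ⟨j, hj, by omega⟩

/-- `(v_x^◊, v_y^◊)_S = 0` if `x`, `y` are too far, and otherwise
`(v_x^◊, v_y^◊)_S = q^d (k)!_{q²} Π_{i=1}^{n−k} (l_i)_{q²}` with
`d = Σ_i |x_i − y_i|` and `l_i` the lengths of the generating intervals. -/
theorem sartori_form_on_canonical (n k : ℕ) (hkn : k ≤ n) (x y : Finset ℕ)
    (hx : x ⊆ Finset.range n) (hy : y ⊆ Finset.range n)
    (hxk : x.card = k) (hyk : y.card = k) :
    (TooFar k x y → formS n k (canonVec n k x) (canonVec n k y) = 0) ∧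
    (¬ TooFar k x y →
      formS n k (canonVec n k x) (canonVec n k y) =
        RatFunc.X ^ (∑ i ∈ Finset.range k, ((nthElt x i : ℤ) - (nthElt y i : ℤ)).natAbs) *
          qFactF k *
          ∏ i ∈ Finset.range (n - k),
            qIntF (min (hnth n x (i + 1)) (hnth n y (i + 1))
              - max (hnth n x i) (hnth n y i))) := by
  have hsum := sum_canonVec_mul_canonVec hkn hx hy hxk hyk
  refine ⟨fun hfar => ?_, fun _ => by rw [formS, hsum]; ring⟩
  obtain ⟨j, hj, hlength⟩ := hfar.exists_min_sub_max_eq_zero hx hy hxk hyk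
  rw [formS, hsum, prod_eq_zero (mem_range.2 hj) (by rw [hlength, qIntF, sum_range_zero]),
    mul_zero, mul_zero]
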